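/- Let M be a positive integer-valued random variable and let p < E[M] (allowing E[M] = ∞). For x ∈ (0,1], let M_x be distributed Bin(M, x) conditionally on M. Then there exists ε > 0 such that for all x ∈ (0,1], P(M_x ≥ 1) ≥ min(p·x, ε). -/
import Mathlib


open MeasureTheory
open scoped ENNReal

private lemma aux_pow_bound (x : ℝ) (hx0 : 0 ≤ x) (hx1 : x ≤ 1) :
    ∀ n : ℕ, (1 - x) ^ n ≤ 1 - n * x + (n : ℝ) ^ 2 / 2 * x ^ 2 := by
  intro n
  induction n with
  | zero => simp
  | succ n ih =>
    have h1x : (0:ℝ) ≤ 1 - x := by linarith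
    have hn : (0:ℝ) ≤ n := Nat.cast_nonneg n
    calc (1 - x) ^ (n + 1) = (1 - x) ^ n * (1 - x) := pow_succ _ _
      _ ≤ (1 - n * x + (n : ℝ) ^ 2 / 2 * x ^ 2) * (1 - x) :=
          mul_le_mul_of_nonneg_right ih h1x
      _ ≤ 1 - (n + 1 : ℕ) * x + ((n + 1 : ℕ) : ℝ) ^ 2 / 2 * x ^ 2 := by
          push_cast
          nlinarith [sq_nonneg x, mul_nonneg (mul_nonneg hx0 hx0) hx0,
            mul_nonneg (mul_nonneg hn hn) (mul_nonneg (mul_nonneg hx0 hx0) hx0)]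

/-- Pemantle's lemma: let `M` be a positive integer-valued random
variable and `p < E[M]` (possibly `E[M] = ∞`). Writing
`P(M_x ≥ 1) = 1 - E[(1-x)^M]` for the binomial thinning `M_x ~ Bin(M, x)`,
there exists `ε > 0` such that `P(M_x ≥ 1) ≥ min(px, ε)` for all `x ∈ (0,1]`. -/
theorem binomial_thinning_lower_bound
    {Ω : Type*} [MeasurableSpace Ω] (μ : Measure Ω) [IsProbabilityMeasure μ]
    (M : Ω → ℕ) (hmM : Measurable M) (hMpos : ∀ ω, 1 ≤ M ω)
    (p : ℝ) (hp : ENNReal.ofReal p < ∫⁻ ω, (M ω : ℝ≥0∞) ∂μ) :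
    ∃ ε : ℝ, 0 < ε ∧ ∀ x : ℝ, 0 < x → x ≤ 1 →
      min (p * x) ε ≤ 1 - ∫ ω, (1 - x) ^ (M ω) ∂μ := by
  -- integrability of the powers
  have hint : ∀ x : ℝ, 0 ≤ x → x ≤ 1 →
      Integrable (fun ω => (1 - x) ^ (M ω)) μ := by
    intro x hx0 hx1
    have hmeas : Measurable fun ω => (1 - x) ^ (M ω) :=
      measurable_const.pow hmM
    refine (integrable_const (1:ℝ)).mono' hmeas.aestronglyMeasurable ?_
    filter_upwards with ω
    rw [Real.norm_eq_abs, abs_pow, abs_of_nonneg (by linarith)]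
    exact pow_le_one₀ (by linarith) (by linarith)
  -- f(x) ≥ x
  have key1 : ∀ x : ℝ, 0 < x → x ≤ 1 →
      x ≤ 1 - ∫ ω, (1 - x) ^ (M ω) ∂μ := by
    intro x hx0 hx1
    have hle : ∫ ω, (1 - x) ^ (M ω) ∂μ ≤ ∫ _, (1 - x) ∂μ := by
      refine integral_mono (hint x hx0.le hx1) (integrable_const _) ?_
      intro ω
      have := pow_le_pow_of_le_one (by linarith : (0:ℝ) ≤ 1 - x)
        (by linarith : (1:ℝ) - x ≤ 1) (hMpos ω)
      simpa using this
    have : ∫ _, (1 - x) ∂μ = 1 - x := by simp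
    linarith [hle, this.symm ▸ hle]
  by_cases hp1 : p ≤ 1
  · refine ⟨1, one_pos, fun x hx0 hx1 => ?_⟩
    have h1 := key1 x hx0 hx1
    have : p * x ≤ x := by nlinarith
    calc min (p * x) 1 ≤ p * x := min_le_left _ _
      _ ≤ x := this
      _ ≤ _ := h1
  · push_neg at hp1
    -- truncate: find N with p < E[min(M,N)]
    have hsup : (∫⁻ ω, ((M ω : ℝ≥0∞)) ∂μ) =
        ⨆ n : ℕ, ∫⁻ ω, ((min (M ω) n : ℕ) : ℝ≥0∞) ∂μ := by
      rw [← lintegral_iSup]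
      · refine lintegral_congr fun ω => ?_
        refine le_antisymm ?_ (iSup_le fun n => by exact_mod_cast Nat.cast_le.mpr (min_le_left _ _))
        refine le_iSup_of_le (M ω) ?_
        simp
      · exact fun n => by
          have : Measurable fun ω => min (M ω) n := hmM.min measurable_const
          fun_prop
      · intro i j hij ω
        exact_mod_cast Nat.cast_le.mpr (min_le_min le_rfl hij)
    rw [hsup, lt_iSup_iff] at hp
    obtain ⟨N, hN⟩ := hp
    -- convert to a real integral
    have hintN : Integrable (fun ω => ((min (M ω) N : ℕ) : ℝ)) μ := by
      have hmeas : Measurable fun ω => ((min (M ω) N : ℕ) : ℝ) := by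
        have : Measurable fun ω => min (M ω) N := hmM.min measurable_const
        fun_prop
      refine (integrable_const (N:ℝ)).mono' hmeas.aestronglyMeasurable ?_
      filter_upwards with ω
      rw [Real.norm_eq_abs, abs_of_nonneg (Nat.cast_nonneg _)]
      exact_mod_cast min_le_right _ _
    set q : ℝ := ∫ ω, ((min (M ω) N : ℕ) : ℝ) ∂μ with hq
    have hql : ∫⁻ ω, ((min (M ω) N : ℕ) : ℝ≥0∞) ∂μ = ENNReal.ofReal q := by
      rw [hq, ofReal_integral_eq_lintegral_ofReal hintN
        (ae_of_all _ fun ω => Nat.cast_nonneg _)]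
      refine lintegral_congr fun ω => ?_
      rw [ENNReal.ofReal_natCast]
    have hpq : p < q := by
      rw [hql] at hN
      have hq0 : 0 < q := by
        by_contra h
        push_neg at h
        rw [ENNReal.ofReal_eq_zero.mpr h] at hN
        exact absurd hN (by simp)
      exact (ENNReal.ofReal_lt_ofReal_iff hq0).mp hN
    -- main estimate
    refine ⟨2 * (q - p) / (N + 1) ^ 2, div_pos (by linarith) (by positivity), fun x hx0 hx1 => ?_⟩
    rcases le_or_gt x (2 * (q - p) / (N + 1) ^ 2) with hxε | hxε
    · -- small x: p x ≤ f(x)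
      have hbound : ∫ ω, (1 - x) ^ (M ω) ∂μ ≤
          ∫ ω, (1 - ((min (M ω) N : ℕ) : ℝ) * x + ((N:ℝ) + 1) ^ 2 / 2 * x ^ 2) ∂μ := by
        refine integral_mono (hint x hx0.le hx1) ?_ ?_
        · exact (integrable_const 1 |>.sub (hintN.mul_const x)).add (integrable_const _)
        · intro ω
          have h1 : (1 - x) ^ (M ω) ≤ (1 - x) ^ (min (M ω) N) :=
            pow_le_pow_of_le_one (by linarith) (by linarith) (min_le_left _ _)
          have h2 := aux_pow_bound x hx0.le hx1 (min (M ω) N)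
          have h3 : ((min (M ω) N : ℕ) : ℝ) ^ 2 / 2 ≤ ((N:ℝ) + 1) ^ 2 / 2 := by
            have : ((min (M ω) N : ℕ) : ℝ) ≤ (N : ℝ) := by
              exact_mod_cast min_le_right _ _
            nlinarith [Nat.cast_nonneg (min (M ω) N) (α := ℝ)]
          have h4 : ((min (M ω) N : ℕ) : ℝ) ^ 2 / 2 * x ^ 2 ≤ ((N:ℝ) + 1) ^ 2 / 2 * x ^ 2 :=
            mul_le_mul_of_nonneg_right h3 (sq_nonneg x)
          calc (1 - x) ^ (M ω) ≤ (1 - x) ^ (min (M ω) N) := h1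
            _ ≤ 1 - ((min (M ω) N : ℕ) : ℝ) * x + ((min (M ω) N : ℕ) : ℝ) ^ 2 / 2 * x ^ 2 := h2
            _ ≤ 1 - ((min (M ω) N : ℕ) : ℝ) * x + ((N:ℝ) + 1) ^ 2 / 2 * x ^ 2 := by linarith
      have hval : ∫ ω, (1 - ((min (M ω) N : ℕ) : ℝ) * x + ((N:ℝ) + 1) ^ 2 / 2 * x ^ 2) ∂μ
          = 1 - q * x + ((N:ℝ) + 1) ^ 2 / 2 * x ^ 2 := by
        have hfun : (fun ω => 1 - ((min (M ω) N : ℕ) : ℝ) * x + ((N:ℝ) + 1) ^ 2 / 2 * x ^ 2)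
            = fun ω => (1 + ((N:ℝ) + 1) ^ 2 / 2 * x ^ 2) - ((min (M ω) N : ℕ) : ℝ) * x := by
          funext ω; ring
        rw [hfun, integral_sub (integrable_const _) (hintN.mul_const x),
          integral_mul_const, integral_const]
        simp [hq]
        ring
      rw [hval] at hbound
      have hεx : ((N:ℝ) + 1) ^ 2 / 2 * x ≤ q - p := by
        have hN1 : (0:ℝ) < ((N:ℝ) + 1) ^ 2 := by positivity
        rw [le_div_iff₀ hN1] at hxε
        nlinarith
      have : p * x ≤ 1 - ∫ ω, (1 - x) ^ (M ω) ∂μ := by nlinarith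
      exact le_trans (min_le_left _ _) this
    · -- large x: ε ≤ x ≤ f(x)
      have h1 := key1 x hx0 hx1
      calc min (p * x) (2 * (q - p) / (N + 1) ^ 2) ≤ 2 * (q - p) / (N + 1) ^ 2 :=
            min_le_right _ _
        _ ≤ x := hxε.le
        _ ≤ _ := h1
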